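/- arXiv:2312.10866 — 11 statements merged into one kernel-verified Lean document; each statement's English description precedes it below -/
import Mathlib

section
/- Let a, b, c, n be positive integers such that a, b, c satisfy the strict triangle inequalities (a < b + c, b < a + c, c < a + b), such that n² = 3(a+b+c)(−a+b+c)(a−b+c)(a+b−c), and such that n < 4(a+b+c). Then the multiset {a, b, c} is one of: {3, 3, 3}; {x, x, 1} for some positive integers x, y with 4x² − 3y² = 1; {x, x, 2} for some positive integers x, y with x² − 3y² = 1; or {3x+1, 3x−1, 3} for some positive integers x, y with 4x² − 15y² = 1. -/
lemma nonsq (n K s : ℕ) (h : n^2 = K) (h1 : s*s < K) (h2 : K < (s+1)*(s+1)) : False := by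
  rcases Nat.lt_or_ge n (s+1) with h3 | h3
  · nlinarith
  · nlinarith

lemma ms12 (a b c : ℕ) : ({a,b,c} : Multiset ℕ) = {b,a,c} := Multiset.cons_swap a b {c}
lemma ms23 (a b c : ℕ) : ({a,b,c} : Multiset ℕ) = {a,c,b} := congrArg (a ::ₘ ·) (Multiset.cons_swap b c 0)
lemma ms_cba (a b c : ℕ) : ({a,b,c} : Multiset ℕ) = {c,b,a} := by rw [ms12, ms23, ms12]
lemma ms_bca (a b c : ℕ) : ({a,b,c} : Multiset ℕ) = {b,c,a} := by rw [ms12, ms23]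
lemma ms_cab (a b c : ℕ) : ({a,b,c} : Multiset ℕ) = {c,a,b} := by rw [ms23, ms12]

lemma L11 (w n : ℕ) (hn : 0 < n) (hw : w % 2 = 1) (hN : n^2 = 3*(1+1+w)*1*1*w) :
    ∃ x y : ℕ, 0 < y ∧ 4*x^2 = 3*y^2 + 1 ∧ w + 1 = 2*x := by
  have h3n : (3:ℕ) ∣ n := Nat.Prime.dvd_of_dvd_pow (by norm_num)
    ⟨(1+1+w)*w, by rw [hN]; ring⟩
  obtain ⟨y, hy⟩ := h3n
  have hyw : 3*(y^2) = (2+w)*w := by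
    have h' : (3*y)^2 = 3*(1+1+w)*1*1*w := by rw [← hy]; exact hN
    linarith [h']
  obtain ⟨x, hx⟩ : ∃ x, w + 1 = 2*x := ⟨(w+1)/2, by omega⟩
  refine ⟨x, y, by omega, ?_, hx⟩
  have e : (w+1)^2 = 4*x^2 := by rw [hx]; ring
  have e2 : (w+1)^2 = (2+w)*w + 1 := by ring
  linarith [hyw, e, e2]

lemma L13 (w n : ℕ) (h3 : 3 ≤ w) (hN : n^2 = 3*(1+3+w)*1*3*w) : False := by
  have h3n : (3:ℕ) ∣ n := Nat.Prime.dvd_of_dvd_pow (by norm_num)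
    ⟨(1+3+w)*w*3, by rw [hN]; ring⟩
  obtain ⟨m, hm⟩ := h3n
  have hm2 : m^2 = (4+w)*w := by
    have h' : (3*m)^2 = 3*(1+3+w)*1*3*w := by rw [← hm]; exact hN
    linarith [h']
  have hlt : m < w + 2 := by nlinarith [hm2]
  nlinarith [hm2, hlt]

lemma L22 (w n : ℕ) (hn : 0 < n) (hw : w % 2 = 0) (hN : n^2 = 3*(2+2+w)*2*2*w) :
    ∃ x y : ℕ, 0 < y ∧ x^2 = 3*y^2 + 1 ∧ w + 2 = 2*x := by
  have h3n : (3:ℕ) ∣ n := Nat.Prime.dvd_of_dvd_pow (by norm_num)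
    ⟨(2+2+w)*w*4, by rw [hN]; ring⟩
  have h2n : (2:ℕ) ∣ n := Nat.Prime.dvd_of_dvd_pow Nat.prime_two
    ⟨3*(2+2+w)*w*2, by rw [hN]; ring⟩
  have h6n : (6:ℕ) ∣ n := by omega
  obtain ⟨s, hs⟩ := h6n
  have hs2 : 3*(s^2) = (4+w)*w := by
    have h' : (6*s)^2 = 3*(2+2+w)*2*2*w := by rw [← hs]; exact hN
    linarith [h']
  obtain ⟨t, ht⟩ : ∃ t, w = 2*t := ⟨w/2, by omega⟩
  have h2s : (2:ℕ) ∣ s := by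
    refine Nat.Prime.dvd_of_dvd_pow (p := 2) Nat.prime_two (n := 2) ?_
    have hh : (2:ℕ) ∣ 3*(s^2) := ⟨(4+2*t)*t, by rw [hs2, ht]; ring⟩
    rcases (Nat.prime_two.dvd_mul).mp hh with h | h
    · norm_num at h
    · exact h
  obtain ⟨y, hy⟩ := h2s
  refine ⟨t+1, y, by omega, ?_, by omega⟩
  have h3y : 3*(y^2) = (2+t)*t := by
    have h' : 3*((2*y)^2) = (4+2*t)*(2*t) := by rw [← hy, ← ht]; exact hs2
    linarith [h']
  have e2 : (t+1)^2 = (2+t)*t + 1 := by ring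
  linarith [h3y, e2]

lemma L15 (w n : ℕ) (hn : 0 < n) (hw : w % 2 = 1) (h5 : 5 ≤ w)
    (hN : n^2 = 3*(1+5+w)*1*5*w) :
    ∃ x y : ℕ, 0 < y ∧ 4*x^2 = 15*y^2 + 1 ∧ w + 3 = 6*x := by
  have h3n : (3:ℕ) ∣ n := Nat.Prime.dvd_of_dvd_pow (by norm_num)
    ⟨(1+5+w)*w*5, by rw [hN]; ring⟩
  obtain ⟨m, hm⟩ := h3n
  have hm2 : 3*(m^2) = 5*((6+w)*w) := by
    have h' : (3*m)^2 = 3*(1+5+w)*1*5*w := by rw [← hm]; exact hN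
    linarith [h']
  have h5m : (5:ℕ) ∣ m := by
    refine Nat.Prime.dvd_of_dvd_pow (p := 5) (by norm_num) (n := 2) ?_
    have hh : (5:ℕ) ∣ 3*(m^2) := ⟨(6+w)*w, hm2⟩
    rcases (Nat.Prime.dvd_mul (by norm_num)).mp hh with h | h
    · norm_num at h
    · exact h
  obtain ⟨k, hk⟩ := h5m
  have hk2 : 15*(k^2) = (6+w)*w := by
    have h' : 3*((5*k)^2) = 5*((6+w)*w) := by rw [← hk]; exact hm2
    linarith [h']
  have h3w : (3:ℕ) ∣ w := by
    refine Nat.Prime.dvd_of_dvd_pow (p := 3) (by norm_num) (n := 2) ?_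
    have hd6 : (3:ℕ) ∣ 6*w := ⟨2*w, by ring⟩
    have hd15 : (3:ℕ) ∣ w^2 + 6*w := ⟨5*(k^2), by linarith [hk2]⟩
    exact (Nat.dvd_add_iff_left hd6).mpr hd15
  obtain ⟨r, hr⟩ := h3w
  have hk3 : 5*(k^2) = 3*((2+r)*r) := by
    have h' : 15*(k^2) = (6+3*r)*(3*r) := by rw [← hr]; exact hk2
    linarith [h']
  have h3k : (3:ℕ) ∣ k := by
    refine Nat.Prime.dvd_of_dvd_pow (p := 3) (by norm_num) (n := 2) ?_
    have hh : (3:ℕ) ∣ 5*(k^2) := ⟨(2+r)*r, hk3⟩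
    rcases (Nat.Prime.dvd_mul (by norm_num)).mp hh with h | h
    · norm_num at h
    · exact h
  obtain ⟨y, hy⟩ := h3k
  have h15 : 15*(y^2) = (2+r)*r := by
    have h' : 5*((3*y)^2) = 3*((2+r)*r) := by rw [← hy]; exact hk3
    linarith [h']
  obtain ⟨x, hx⟩ : ∃ x, r + 1 = 2*x := ⟨(r+1)/2, by omega⟩
  have hr2 : 2 ≤ r := by omega
  refine ⟨x, y, ?_, ?_, by omega⟩
  · rcases Nat.eq_zero_or_pos y with h0 | h0
    · exfalso
      rw [h0] at h15
      simp at h15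
      omega
    · exact h0
  · have e : (r+1)^2 = 4*x^2 := by rw [hx]; ring
    have e2 : (r+1)^2 = (2+r)*r + 1 := by ring
    linarith [h15, e, e2]

lemma L17 (w n : ℕ) (hlo : 7 ≤ w) (hhi : w ≤ 25) (hp : w % 2 = 1)
    (hN : n^2 = 3*(1+7+w)*1*7*w) : False := by
  interval_cases w
  · norm_num at hN
    exact nonsq n 2205 46 hN (by norm_num) (by norm_num)
  · omega
  · norm_num at hN
    exact nonsq n 3213 56 hN (by norm_num) (by norm_num)
  · omega
  · norm_num at hN
    exact nonsq n 4389 66 hN (by norm_num) (by norm_num)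
  · omega
  · norm_num at hN
    exact nonsq n 5733 75 hN (by norm_num) (by norm_num)
  · omega
  · norm_num at hN
    exact nonsq n 7245 85 hN (by norm_num) (by norm_num)
  · omega
  · norm_num at hN
    exact nonsq n 8925 94 hN (by norm_num) (by norm_num)
  · omega
  · norm_num at hN
    exact nonsq n 10773 103 hN (by norm_num) (by norm_num)
  · omega
  · norm_num at hN
    exact nonsq n 12789 113 hN (by norm_num) (by norm_num)
  · omega
  · norm_num at hN
    exact nonsq n 14973 122 hN (by norm_num) (by norm_num)
  · omega
  · norm_num at hN
    exact nonsq n 17325 131 hN (by norm_num) (by norm_num)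

lemma L19 (w n : ℕ) (hlo : 9 ≤ w) (hhi : w ≤ 14) (hp : w % 2 = 1)
    (hN : n^2 = 3*(1+9+w)*1*9*w) : False := by
  interval_cases w
  · norm_num at hN
    exact nonsq n 4617 67 hN (by norm_num) (by norm_num)
  · omega
  · norm_num at hN
    exact nonsq n 6237 78 hN (by norm_num) (by norm_num)
  · omega
  · norm_num at hN
    exact nonsq n 8073 89 hN (by norm_num) (by norm_num)
  · omega

lemma L111 (w n : ℕ) (hlo : 11 ≤ w) (hhi : w ≤ 11) (hp : w % 2 = 1)
    (hN : n^2 = 3*(1+11+w)*1*11*w) : False := by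
  interval_cases w
  · norm_num at hN
    exact nonsq n 8349 91 hN (by norm_num) (by norm_num)

lemma L24 (w n : ℕ) (hlo : 4 ≤ w) (hhi : w ≤ 11) (hp : w % 2 = 0)
    (hN : n^2 = 3*(2+4+w)*2*4*w) : False := by
  interval_cases w
  · norm_num at hN
    exact nonsq n 960 30 hN (by norm_num) (by norm_num)
  · omega
  · norm_num at hN
    exact nonsq n 1728 41 hN (by norm_num) (by norm_num)
  · omega
  · norm_num at hN
    exact nonsq n 2688 51 hN (by norm_num) (by norm_num)
  · omega
  · norm_num at hN
    exact nonsq n 3840 61 hN (by norm_num) (by norm_num)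
  · omega

lemma L26 (w n : ℕ) (hlo : 6 ≤ w) (hhi : w ≤ 6) (hp : w % 2 = 0)
    (hN : n^2 = 3*(2+6+w)*2*6*w) : False := by
  interval_cases w
  · norm_num at hN
    exact nonsq n 3024 54 hN (by norm_num) (by norm_num)

lemma L33 (w n : ℕ) (hlo : 5 ≤ w) (hhi : w ≤ 8) (hp : w % 2 = 1)
    (hN : n^2 = 3*(3+3+w)*3*3*w) : False := by
  interval_cases w
  · norm_num at hN
    exact nonsq n 1485 38 hN (by norm_num) (by norm_num)
  · omega
  · norm_num at hN
    exact nonsq n 2457 49 hN (by norm_num) (by norm_num)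
  · omega


set_option maxHeartbeats 1000000 in
lemma key (a b c n : ℕ) (ha : 0 < a) (hb : 0 < b) (hc : 0 < c) (hn : 0 < n)
    (hab : a < b + c) (hbc : b < a + c) (hca : c < a + b)
    (heron : (n : ℤ)^2 = 3 * (a + b + c) * (-(a:ℤ) + b + c) * ((a:ℤ) - b + c) * ((a:ℤ) + b - c))
    (hdom : n < 4 * (a + b + c)) (hcb : c ≤ b) (hba : b ≤ a) :
    ({a, b, c} : Multiset ℕ) = {3, 3, 3} ∨
    (∃ x y : ℕ, 0 < x ∧ 0 < y ∧ 4 * x^2 = 3 * y^2 + 1 ∧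
      ({a, b, c} : Multiset ℕ) = {x, x, 1}) ∨
    (∃ x y : ℕ, 0 < x ∧ 0 < y ∧ x^2 = 3 * y^2 + 1 ∧
      ({a, b, c} : Multiset ℕ) = {x, x, 2}) ∨
    (∃ x y : ℕ, 0 < x ∧ 0 < y ∧ 4 * x^2 = 15 * y^2 + 1 ∧
      ({a, b, c} : Multiset ℕ) = {3 * x + 1, 3 * x - 1, 3}) := by
  obtain ⟨u, hu⟩ : ∃ u, b + c = a + u := ⟨b + c - a, by omega⟩
  obtain ⟨v, hv⟩ : ∃ v, a + c = b + v := ⟨a + c - b, by omega⟩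
  obtain ⟨w, hw⟩ : ∃ w, a + b = c + w := ⟨a + b - c, by omega⟩
  have hA : (-(a:ℤ) + b + c) = (u:ℤ) := by
    have : (b:ℤ) + c = a + u := by exact_mod_cast hu
    linarith
  have hB : ((a:ℤ) - b + c) = (v:ℤ) := by
    have : (a:ℤ) + c = b + v := by exact_mod_cast hv
    linarith
  have hC : ((a:ℤ) + b - c) = (w:ℤ) := by
    have : (a:ℤ) + b = c + w := by exact_mod_cast hw
    linarith
  rw [hA, hB, hC] at heron
  have hN : n^2 = 3*(u+v+w)*u*v*w := by
    have h0 : n^2 = 3*(a+b+c)*u*v*w := by exact_mod_cast heron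
    have hs : a + b + c = u + v + w := by omega
    rwa [hs] at h0
  have hdom' : n < 4*(u+v+w) := by omega
  have hu0 : 0 < u := by omega
  have huv : u ≤ v := by omega
  have hvw : v ≤ w := by omega
  have hkey : 3*(u*v*w) < 16*(u+v+w) := by
    by_contra h
    push_neg at h
    have h1 : 16*(u+v+w)*(u+v+w) ≤ 3*(u*v*w)*(u+v+w) := Nat.mul_le_mul_right _ h
    nlinarith [hN, hdom']
  have huv15 : u*v ≤ 15 := by
    by_contra h
    push_neg at h
    have h1 : 16*(u+v+w) ≤ 48*w := by omega
    have h2 : 48*w ≤ 3*(u*v)*w := Nat.mul_le_mul_right w (by linarith)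
    have h3 : 3*(u*v)*w = 3*(u*v*w) := by ring
    linarith [hkey]
  have hu3 : u ≤ 3 := by
    by_contra h
    push_neg at h
    have h4 : 4*4 ≤ u*v := Nat.mul_le_mul (by omega) (by omega)
    linarith
  have hpuv : (u + v) % 2 = 0 := by omega
  have hpuw : (u + w) % 2 = 0 := by omega
  interval_cases u
  · have hvub : v ≤ 15 := by linarith
    interval_cases v
    · -- (1,1)
      obtain ⟨x, y, hy, hxy, hwx⟩ := L11 w n hn (by omega) hN
      right; left
      refine ⟨x, y, by omega, hy, hxy, ?_⟩
      have e1 : a = x := by omega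
      have e2 : b = x := by omega
      have e3 : c = 1 := by omega
      rw [e1, e2, e3]
    · exfalso; omega
    · exact absurd (L13 w n (by omega) hN) (by simp)
    · exfalso; omega
    · -- (1,5)
      obtain ⟨x, y, hy, hxy, hwx⟩ := L15 w n hn (by omega) (by omega) hN
      right; right; right
      refine ⟨x, y, by omega, hy, hxy, ?_⟩
      have e1 : a = 3*x + 1 := by omega
      have e2 : b = 3*x - 1 := by omega
      have e3 : c = 3 := by omega
      rw [e1, e2, e3]
    · exfalso; omega
    · exact absurd (L17 w n (by omega) (by omega) (by omega) hN) (by simp)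
    · exfalso; omega
    · exact absurd (L19 w n (by omega) (by omega) (by omega) hN) (by simp)
    · exfalso; omega
    · exact absurd (L111 w n (by omega) (by omega) (by omega) hN) (by simp)
    · exfalso; omega
    · exfalso; omega
    · exfalso; omega
    · exfalso; omega
  · have hvub : v ≤ 7 := by linarith
    interval_cases v
    · -- (2,2)
      obtain ⟨x, y, hy, hxy, hwx⟩ := L22 w n hn (by omega) hN
      right; right; left
      refine ⟨x, y, by omega, hy, hxy, ?_⟩
      have e1 : a = x := by omega
      have e2 : b = x := by omega
      have e3 : c = 2 := by omega
      rw [e1, e2, e3]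
    · exfalso; omega
    · exact absurd (L24 w n (by omega) (by omega) (by omega) hN) (by simp)
    · exfalso; omega
    · exact absurd (L26 w n (by omega) (by omega) (by omega) hN) (by simp)
    · exfalso; omega
  · have hvub : v ≤ 5 := by linarith
    interval_cases v
    · -- (3,3)
      rcases Nat.lt_or_ge w 5 with h5 | h5
      · left
        have e1 : a = 3 ∧ b = 3 ∧ c = 3 := by omega
        rw [e1.1, e1.2.1, e1.2.2]
      · exact absurd (L33 w n (by omega) (by omega) (by omega) hN) (by simp)
    · exfalso; omega
    · exfalso; omega

theorem perimeter_dominant_classification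
    (a b c n : ℕ) (ha : 0 < a) (hb : 0 < b) (hc : 0 < c) (hn : 0 < n)
    (hab : a < b + c) (hbc : b < a + c) (hca : c < a + b)
    (heron : (n : ℤ)^2 = 3 * (a + b + c) * (-(a:ℤ) + b + c) * ((a:ℤ) - b + c) * ((a:ℤ) + b - c))
    (hdom : n < 4 * (a + b + c)) :
    ({a, b, c} : Multiset ℕ) = {3, 3, 3} ∨
    (∃ x y : ℕ, 0 < x ∧ 0 < y ∧ 4 * x^2 = 3 * y^2 + 1 ∧
      ({a, b, c} : Multiset ℕ) = {x, x, 1}) ∨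
    (∃ x y : ℕ, 0 < x ∧ 0 < y ∧ x^2 = 3 * y^2 + 1 ∧
      ({a, b, c} : Multiset ℕ) = {x, x, 2}) ∨
    (∃ x y : ℕ, 0 < x ∧ 0 < y ∧ 4 * x^2 = 15 * y^2 + 1 ∧
      ({a, b, c} : Multiset ℕ) = {3 * x + 1, 3 * x - 1, 3}) := by
  rcases le_total c b with h1 | h1 <;> rcases le_total b a with h2 | h2 <;>
    rcases le_total c a with h3 | h3
  · exact key a b c n ha hb hc hn hab hbc hca heron hdom (by omega) (by omega)
  · exact key a b c n ha hb hc hn hab hbc hca heron hdom (by omega) (by omega)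
  · rw [ms12 a b c]
    exact key b a c n hb ha hc hn (by omega) (by omega) (by omega)
      (by linear_combination heron) (by omega) (by omega) (by omega)
  · rw [ms_bca a b c]
    exact key b c a n hb hc ha hn (by omega) (by omega) (by omega)
      (by linear_combination heron) (by omega) (by omega) (by omega)
  · rw [ms23 a b c]
    exact key a c b n ha hc hb hn (by omega) (by omega) (by omega)
      (by linear_combination heron) (by omega) (by omega) (by omega)
  · rw [ms_cab a b c]
    exact key c a b n hc ha hb hn (by omega) (by omega) (by omega)
      (by linear_combination heron) (by omega) (by omega) (by omega)
  · rw [ms_bca a b c]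
    exact key b c a n hb hc ha hn (by omega) (by omega) (by omega)
      (by linear_combination heron) (by omega) (by omega) (by omega)
  · rw [ms_cba a b c]
    exact key c b a n hc hb ha hn (by omega) (by omega) (by omega)
      (by linear_combination heron) (by omega) (by omega) (by omega)
end

section
/- Let A, B, C be three affinely independent points in the Euclidean plane ℝ² such that dist(A,B) = c√3, dist(B,C) = a√3, dist(C,A) = b√3 for positive integers a, b, c, such that the area of the triangle ABC (the Lebesgue measure of the convex hull of {A, B, C}) equals n√3/4 for some positive integer n, and such that the perimeter dist(A,B) + dist(B,C) + dist(C,A) exceeds the area. Then the multiset {a, b, c} is one of: {3, 3, 3}; {x, x, 1} for some positive integers x, y with 4x² − 3y² = 1; {x, x, 2} for some positive integers x, y with x² − 3y² = 1; or {3x+1, 3x−1, 3} for some positive integers x, y with 4x² − 15y² = 1. -/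
/-!
Mapping the unit triangle affinely onto `ABC` shows that the area is `|twiceSignedArea A B C| / 2`,
and Heron's formula turns the area condition into `n² = 3(a+b+c)(-a+b+c)(a-b+c)(a+b-c)`.
In the Ravi variables `u = -a+b+c`, `v = a-b+c`, `w = a+b-c`, which are positive integers of equal
parity with `u + v + w = a + b + c`, this reads `n² = 3(u+v+w)uvw`, and perimeter dominance
`n < 4(a+b+c)` becomes `3uvw < 16(u+v+w)`. For `u ≤ v ≤ w` this forces `uv < 16`. The pairs
`(u, v) = (1, 1), (2, 2), (1, 5)` lead to the three Pell equations, `(1, 3)` would make `w(w+4)` a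
square strictly between `(w+1)²` and `(w+2)²`, and in all other cases `w` is bounded, leaving
finitely many values of `3(u+v+w)uvw`, none of which is a square except for `u = v = w = 3`.
-/

open MeasureTheory Set
open scoped Pointwise

def unitTriangle : Set (ℝ × ℝ) := {p | 0 ≤ p.1 ∧ 0 ≤ p.2 ∧ p.1 + p.2 ≤ 1}

lemma convexHull_eq_unitTriangle :
    convexHull ℝ {(0 : ℝ × ℝ), (1, 0), (0, 1)} = unitTriangle := by
  apply Subset.antisymm
  · refine convexHull_min ?_ ?_
    · rintro _ (rfl | rfl | rfl) <;> norm_num [unitTriangle]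
    · rintro p ⟨hp1, hp2, hp3⟩ q ⟨hq1, hq2, hq3⟩ s t hs ht hst
      simp only [unitTriangle, mem_ofPred_eq, Prod.fst_add, Prod.snd_add, Prod.smul_fst,
        Prod.smul_snd, smul_eq_mul]
      refine ⟨by positivity, by positivity, ?_⟩
      nlinarith
  · rintro p ⟨hp1, hp2, hp3⟩
    have hmem := (convex_convexHull ℝ ({(0 : ℝ × ℝ), (1, 0), (0, 1)} : Set (ℝ × ℝ))).sum_mem
      (t := Finset.univ) (w := ![1 - p.1 - p.2, p.1, p.2]) (z := ![0, (1, 0), (0, 1)])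
      (fun i _ => by fin_cases i <;> simp <;> linarith)
      (by simp [Fin.sum_univ_three]; ring)
      (fun i _ => by fin_cases i <;> exact subset_convexHull ℝ _ (by simp))
    simpa [Fin.sum_univ_three] using hmem

lemma volume_unitTriangle : volume unitTriangle = ENNReal.ofReal (1 / 2) := by
  have hsection (x : ℝ) : volume (Prod.mk x ⁻¹' unitTriangle) =
      (Icc 0 1).indicator (fun x => ENNReal.ofReal (1 - x)) x := by
    by_cases hx : x ∈ Icc (0 : ℝ) 1
    · rw [indicator_of_mem hx, ← sub_zero (1 - x), ← Real.volume_Icc]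
      congr 1
      ext y
      simp only [unitTriangle, mem_preimage, mem_ofPred_eq, mem_Icc]
      constructor
      · rintro ⟨-, hy, hxy⟩
        exact ⟨hy, by linarith⟩
      · rintro ⟨hy, hxy⟩
        exact ⟨hx.1, hy, by linarith⟩
    · rw [indicator_of_notMem hx, ← measure_empty (μ := (volume : Measure ℝ))]
      congr 1
      ext y
      simp only [unitTriangle, mem_preimage, mem_ofPred_eq, mem_empty_iff_false, iff_false,
        not_and]
      intro h0 hy
      simp only [mem_Icc, not_and, not_le] at hx
      linarith [hx h0]
  have hmeas : MeasurableSet unitTriangle := by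
    unfold unitTriangle
    measurability
  rw [Measure.volume_eq_prod, Measure.prod_apply hmeas]
  simp_rw [hsection]
  rw [lintegral_indicator measurableSet_Icc, ← ofReal_integral_eq_lintegral_ofReal]
  · rw [integral_Icc_eq_integral_Ioc, ← intervalIntegral.integral_of_le zero_le_one,
      intervalIntegral.integral_sub intervalIntegrable_const intervalIntegral.intervalIntegrable_id]
    norm_num [integral_id]
  · exact (continuous_const.sub continuous_id).integrableOn_Icc
  · filter_upwards [ae_restrict_mem measurableSet_Icc] with x hx
    simp [hx.2]

lemma volume_convexHull_triangle_prod (p q r : ℝ × ℝ) :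
    volume (convexHull ℝ {p, q, r}) =
      ENNReal.ofReal (|(q.1 - p.1) * (r.2 - p.2) - (r.1 - p.1) * (q.2 - p.2)| / 2) := by
  set L := Matrix.toLin (.finTwoProd ℝ) (.finTwoProd ℝ)
    !![(q - p).1, (r - p).1; (q - p).2, (r - p).2]
  have hvert : ({p, q, r} : Set (ℝ × ℝ)) = p +ᵥ L '' {0, (1, 0), (0, 1)} := by
    simp only [L, image_insert_eq, image_singleton, Matrix.toLin_finTwoProd_apply, vadd_set_insert,
      vadd_set_singleton, vadd_eq_add, Prod.fst_zero, Prod.snd_zero, mul_zero, mul_one, add_zero,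
      zero_add, Prod.mk_zero_zero, Prod.mk.eta, add_sub_cancel]
  rw [hvert, convexHull_vadd, ← LinearMap.image_convexHull, measure_vadd,
    Measure.addHaar_image_linearMap, LinearMap.det_toLin, Matrix.det_fin_two_of,
    convexHull_eq_unitTriangle, volume_unitTriangle, ← ENNReal.ofReal_mul (abs_nonneg _)]
  simp only [Prod.fst_sub, Prod.snd_sub, mul_one_div]

def twiceSignedArea (A B C : EuclideanSpace ℝ (Fin 2)) : ℝ :=
  (B 0 - A 0) * (C 1 - A 1) - (C 0 - A 0) * (B 1 - A 1)

lemma volume_convexHull_triangle (A B C : EuclideanSpace ℝ (Fin 2)) :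
    volume (convexHull ℝ {A, B, C}) = ENNReal.ofReal (|twiceSignedArea A B C| / 2) := by
  let e : EuclideanSpace ℝ (Fin 2) ≃ᵐ ℝ × ℝ :=
    (MeasurableEquiv.toLp 2 (Fin 2 → ℝ)).symm.trans MeasurableEquiv.finTwoArrow
  let ℓ : EuclideanSpace ℝ (Fin 2) ≃ₗ[ℝ] ℝ × ℝ :=
    (WithLp.linearEquiv 2 ℝ (Fin 2 → ℝ)).trans (LinearEquiv.finTwoArrow ℝ ℝ)
  have he : MeasurePreserving e :=
    (EuclideanSpace.volume_preserving_symm_measurableEquiv_toLp (Fin 2)).trans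
      (volume_preserving_finTwoArrow ℝ)
  have hhull :
      convexHull ℝ {A, B, C} = e ⁻¹' convexHull ℝ {(A 0, A 1), (B 0, B 1), (C 0, C 1)} := by
    have h := ℓ.toLinearMap.image_convexHull {A, B, C}
    simp only [image_insert_eq, image_singleton, LinearEquiv.coe_coe] at h
    change convexHull ℝ {A, B, C} = ℓ ⁻¹' convexHull ℝ {ℓ A, ℓ B, ℓ C}
    rw [← h, preimage_image_eq _ ℓ.injective]
  rw [hhull, he.measure_preimage_equiv, volume_convexHull_triangle_prod, twiceSignedArea]

lemma four_mul_twiceSignedArea_sq (A B C : EuclideanSpace ℝ (Fin 2)) :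
    4 * twiceSignedArea A B C ^ 2 =
      4 * dist A B ^ 2 * dist C A ^ 2 - (dist A B ^ 2 + dist C A ^ 2 - dist B C ^ 2) ^ 2 := by
  simp only [twiceSignedArea, EuclideanSpace.dist_sq_eq, Fin.sum_univ_two, Real.dist_eq, sq_abs]
  ring

lemma pos_of_mul_pos_of_add_nonneg {R : Type*} [CommRing R] [LinearOrder R]
    [IsStrictOrderedRing R] {x y z : R} (h : 0 < x * y * z) (hxy : 0 ≤ x + y) (hyz : 0 ≤ y + z)
    (hxz : 0 ≤ x + z) : 0 < x ∧ 0 < y ∧ 0 < z := by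
  refine ⟨?_, ?_, ?_⟩ <;> by_contra! hneg
  · nlinarith [mul_nonneg (by linarith : 0 ≤ y) (by linarith : 0 ≤ z)]
  · nlinarith [mul_nonneg (by linarith : 0 ≤ x) (by linarith : 0 ≤ z)]
  · nlinarith [mul_nonneg (by linarith : 0 ≤ x) (by linarith : 0 ≤ y)]

def PerimeterDominantSides (s : Multiset ℕ) : Prop :=
  s = {3, 3, 3} ∨
    (∃ x y : ℕ, 0 < x ∧ 0 < y ∧ 4 * x^2 = 3 * y^2 + 1 ∧ s = {x, x, 1}) ∨
    (∃ x y : ℕ, 0 < x ∧ 0 < y ∧ x^2 = 3 * y^2 + 1 ∧ s = {x, x, 2}) ∨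
    (∃ x y : ℕ, 0 < x ∧ 0 < y ∧ 4 * x^2 = 15 * y^2 + 1 ∧ s = {3 * x + 1, 3 * x - 1, 3})

lemma perimeterDominantSides_of_isSquare_one_one {w a : ℕ} (ha : w + 1 = 2 * a)
    (hsq : IsSquare (3 * (w + 2) * w)) : PerimeterDominantSides {a, a, 1} := by
  obtain ⟨r, hr⟩ := hsq
  obtain ⟨t, rfl⟩ : 3 ∣ r :=
    Nat.prime_three.dvd_of_dvd_pow (n := 2) ⟨(w + 2) * w, by rw [sq, ← hr, mul_assoc]⟩
  have ht : 0 < t := Nat.pos_of_ne_zero (by rintro rfl; simp at hr; omega)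
  exact Or.inr (Or.inl ⟨a, t, by omega, ht, by nlinarith, rfl⟩)

lemma not_isSquare_one_three {w : ℕ} (hw : 0 < w) : ¬ IsSquare (9 * (w + 4) * w) := by
  rintro ⟨r, hr⟩
  obtain ⟨t, rfl⟩ : 3 ∣ r :=
    Nat.prime_three.dvd_of_dvd_pow (n := 2) ⟨3 * (w + 4) * w, by rw [sq, ← hr]; ring⟩
  have ht : t * t = (w + 4) * w := by nlinarith
  rcases le_or_gt t (w + 1) with h | h <;> nlinarith

lemma perimeterDominantSides_of_isSquare_two_two {w a : ℕ} (hw : 0 < w) (ha : w + 2 = 2 * a)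
    (hsq : IsSquare (12 * (w + 4) * w)) : PerimeterDominantSides {a, a, 2} := by
  obtain ⟨r, hr⟩ := hsq
  obtain ⟨k, rfl⟩ : ∃ k, w = 2 * k := ⟨a - 1, by omega⟩
  obtain ⟨s, rfl⟩ : 4 ∣ r := (Nat.pow_dvd_pow_iff two_ne_zero).mp
    ⟨3 * (k + 2) * k, by rw [sq, ← hr]; ring⟩
  obtain ⟨t, rfl⟩ : 3 ∣ s :=
    Nat.prime_three.dvd_of_dvd_pow (n := 2) ⟨(k + 2) * k, by nlinarith⟩
  have ht : 0 < t := Nat.pos_of_ne_zero (by rintro rfl; simp at hr; omega)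
  exact Or.inr (Or.inr (Or.inl ⟨a, t, by omega, ht, by nlinarith, rfl⟩))

lemma perimeterDominantSides_of_isSquare_one_five {w a b : ℕ} (ha : w + 5 = 2 * a)
    (hb : w + 1 = 2 * b) (hsq : IsSquare (15 * (w + 6) * w)) :
    PerimeterDominantSides {a, b, 3} := by
  obtain ⟨r, hr⟩ := hsq
  have h15 : Squarefree 15 := Nat.squarefree_mul_iff.mpr
    ⟨by norm_num, Nat.prime_three.squarefree, Nat.prime_five.squarefree⟩
  obtain ⟨s, rfl⟩ : 15 ∣ r := (h15.dvd_pow_iff_dvd two_ne_zero).mp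
    ⟨(w + 6) * w, by rw [sq, ← hr, mul_assoc]⟩
  have hs : (w + 3) ^ 2 = 3 * (5 * s ^ 2 + 3) := by nlinarith
  obtain ⟨m, hm⟩ : 3 ∣ w + 3 := Nat.prime_three.dvd_of_dvd_pow ⟨_, hs⟩
  have hm2 : 3 * m ^ 2 = 5 * s ^ 2 + 3 := by nlinarith
  obtain ⟨y, rfl⟩ : 3 ∣ s := Nat.prime_three.dvd_of_dvd_pow (n := 2) (by omega)
  obtain ⟨x, rfl⟩ : ∃ x, m = 2 * x := ⟨m / 2, by omega⟩
  have hxy : 4 * x ^ 2 = 15 * y ^ 2 + 1 := by nlinarith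
  have hy : 0 < y := Nat.pos_of_ne_zero (by rintro rfl; omega)
  refine Or.inr (Or.inr (Or.inr ⟨x, y, by omega, hy, hxy, ?_⟩))
  rw [show a = 3 * x + 1 by omega, show b = 3 * x - 1 by omega]

lemma ravi_family_or_not_isSquare {u v w : ℕ} (hu : 0 < u) (huv : u ≤ v) (hvw : v ≤ w)
    (huv2 : 2 ∣ u + v) (hvw2 : 2 ∣ v + w) (hbound : 3 * (u * v * w) < 16 * (u + v + w)) :
    (u = 1 ∧ v = 1) ∨ (u = 1 ∧ v = 3) ∨ (u = 1 ∧ v = 5) ∨ (u = 2 ∧ v = 2) ∨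
      (u = 3 ∧ v = 3 ∧ w = 3) ∨ ¬ IsSquare (3 * (u + v + w) * (u * v * w)) := by
  have huv16 : u * v < 16 := by
    by_contra! h
    nlinarith
  have hu3 : u ≤ 3 := by nlinarith
  have hv15 : v ≤ 15 := by nlinarith
  -- outside the four infinite families `3uv ≥ 18`, so `w (3uv - 16) < 16 (u + v)` bounds `w`
  have hw : w < 26 ∨ (u = 1 ∧ v = 1) ∨ (u = 1 ∧ v = 3) ∨ (u = 1 ∧ v = 5) ∨ (u = 2 ∧ v = 2) := by
    interval_cases u <;> interval_cases v <;> omega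
  rcases hw with hw | hfamily
  · interval_cases u <;> interval_cases v <;> try omega
    all_goals interval_cases w <;> first | omega | norm_num
  · tauto

lemma perimeterDominantSides_of_ravi_of_le {u v w a b c : ℕ} (hu : 0 < u) (huv : u ≤ v)
    (hvw : v ≤ w) (ha : v + w = 2 * a) (hb : u + w = 2 * b) (hc : u + v = 2 * c)
    (hsq : IsSquare (3 * (u + v + w) * (u * v * w)))
    (hbound : 3 * (u * v * w) < 16 * (u + v + w)) : PerimeterDominantSides {a, b, c} := by
  rcases ravi_family_or_not_isSquare hu huv hvw ⟨c, hc⟩ ⟨a, ha⟩ hbound with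
    ⟨rfl, rfl⟩ | ⟨rfl, rfl⟩ | ⟨rfl, rfl⟩ | ⟨rfl, rfl⟩ | ⟨rfl, rfl, rfl⟩ | hns
  · obtain ⟨rfl, rfl⟩ : b = a ∧ c = 1 := by omega
    exact perimeterDominantSides_of_isSquare_one_one (w := w) (by omega)
      (by convert hsq using 1; ring)
  · exact (not_isSquare_one_three (w := w) (by omega) (by convert hsq using 1; ring)).elim
  · obtain rfl : c = 3 := by omega
    exact perimeterDominantSides_of_isSquare_one_five (w := w) (by omega) (by omega)
      (by convert hsq using 1; ring)
  · obtain ⟨rfl, rfl⟩ : b = a ∧ c = 2 := by omega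
    exact perimeterDominantSides_of_isSquare_two_two (w := w) (by omega) (by omega)
      (by convert hsq using 1; ring)
  · obtain ⟨rfl, rfl, rfl⟩ : a = 3 ∧ b = 3 ∧ c = 3 := by omega
    exact Or.inl rfl
  · exact absurd hsq hns

lemma perimeterDominantSides_of_ravi {u v w a b c : ℕ} (hu : 0 < u) (hv : 0 < v) (hw : 0 < w)
    (ha : v + w = 2 * a) (hb : u + w = 2 * b) (hc : u + v = 2 * c)
    (hsq : IsSquare (3 * (u + v + w) * (u * v * w)))
    (hbound : 3 * (u * v * w) < 16 * (u + v + w)) : PerimeterDominantSides {a, b, c} := by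
  wlog huv : u ≤ v generalizing u v a b
  · rw [show ({a, b, c} : Multiset ℕ) = {b, a, c} from Multiset.cons_swap _ _ _]
    exact this hv hu hb ha (by omega) (by convert hsq using 1; ring)
      (by convert hbound using 2 <;> ring) (by omega)
  wlog huw : u ≤ w generalizing u w a c
  · rw [show ({a, b, c} : Multiset ℕ) = {c, b, a} by
      simp only [Multiset.insert_eq_cons, ← Multiset.singleton_add]; abel]
    exact this hu hw (by omega) (by omega) (by omega) (by convert hsq using 1; ring)
      (by convert hbound using 2 <;> ring) (by omega) (by omega)
  wlog hvw : v ≤ w generalizing v w b c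
  · rw [show ({a, b, c} : Multiset ℕ) = {a, c, b} from congrArg _ (Multiset.pair_comm _ _)]
    exact this hw hv (by omega) hc hb (by convert hsq using 1; ring)
      (by convert hbound using 2 <;> ring) (by omega) (by omega) (by omega)
  exact perimeterDominantSides_of_ravi_of_le hu huv hvw ha hb hc hsq hbound

lemma perimeterDominantSides_of_heron {a b c n : ℕ} (hn : 0 < n)
    (heron : (n : ℤ) ^ 2 = 3 * ((a + b + c) * ((-a + b + c) * (a - b + c) * (a + b - c))))
    (hlt : n < 4 * (a + b + c)) : PerimeterDominantSides {a, b, c} := by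
  have hprod : 0 < (-a + b + c : ℤ) * (a - b + c) * (a + b - c) := by
    have : (0 : ℤ) < 3 * (a + b + c) := by omega
    nlinarith [pow_pos (Int.natCast_pos.mpr hn) 2]
  have hfactors := pos_of_mul_pos_of_add_nonneg hprod (by omega) (by omega) (by omega)
  obtain ⟨u, hu⟩ : ∃ u : ℕ, (u : ℤ) = -a + b + c := ⟨b + c - a, by omega⟩
  obtain ⟨v, hv⟩ : ∃ v : ℕ, (v : ℤ) = a - b + c := ⟨a + c - b, by omega⟩
  obtain ⟨w, hw⟩ : ∃ w : ℕ, (w : ℤ) = a + b - c := ⟨a + b - c, by omega⟩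
  have hsum : u + v + w = a + b + c := by omega
  have hsq : n ^ 2 = 3 * (u + v + w) * (u * v * w) := by
    rw [hsum]
    have : (n : ℤ) ^ 2 = 3 * (a + b + c) * (u * v * w) := by rw [heron, hu, hv, hw]; ring
    exact_mod_cast this
  refine perimeterDominantSides_of_ravi (u := u) (v := v) (w := w) (by omega) (by omega)
    (by omega) (by omega) (by omega) (by omega) ⟨n, by rw [← sq, hsq]⟩ ?_
  rw [hsum] at hsq ⊢
  have hs : 0 < a + b + c := by omega
  nlinarith

theorem perimeter_dominant_classification_euclidean_general
    (A B C : EuclideanSpace ℝ (Fin 2))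
    (a b c n : ℕ) (hn : 0 < n)
    (hAB : dist A B = c * Real.sqrt 3)
    (hBC : dist B C = a * Real.sqrt 3)
    (hCA : dist C A = b * Real.sqrt 3)
    (harea : volume (convexHull ℝ ({A, B, C} : Set (EuclideanSpace ℝ (Fin 2)))) =
      ENNReal.ofReal (n * Real.sqrt 3 / 4))
    (hdom : n * Real.sqrt 3 / 4 < dist A B + dist B C + dist C A) :
    ({a, b, c} : Multiset ℕ) = {3, 3, 3} ∨
    (∃ x y : ℕ, 0 < x ∧ 0 < y ∧ 4 * x^2 = 3 * y^2 + 1 ∧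
      ({a, b, c} : Multiset ℕ) = {x, x, 1}) ∨
    (∃ x y : ℕ, 0 < x ∧ 0 < y ∧ x^2 = 3 * y^2 + 1 ∧
      ({a, b, c} : Multiset ℕ) = {x, x, 2}) ∨
    (∃ x y : ℕ, 0 < x ∧ 0 < y ∧ 4 * x^2 = 15 * y^2 + 1 ∧
      ({a, b, c} : Multiset ℕ) = {3 * x + 1, 3 * x - 1, 3}) := by
  rw [volume_convexHull_triangle, ENNReal.ofReal_eq_ofReal_iff (by positivity) (by positivity)]
    at harea
  have hsqrt3 : Real.sqrt 3 ^ 2 = 3 := Real.sq_sqrt (by norm_num)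
  have harea_sq : twiceSignedArea A B C ^ 2 = 3 * n ^ 2 / 4 := by
    rw [← sq_abs, show |twiceSignedArea A B C| = n * Real.sqrt 3 / 2 by linarith]
    linear_combination (n : ℝ) ^ 2 / 4 * hsqrt3
  have heron : (n : ℝ) ^ 2 = 3 * ((a + b + c) * ((-a + b + c) * (a - b + c) * (a + b - c))) := by
    have h := four_mul_twiceSignedArea_sq A B C
    rw [hAB, hBC, hCA, harea_sq, mul_pow, mul_pow, mul_pow, hsqrt3] at h
    linear_combination h / 3
  have hlt : n < 4 * (a + b + c) := by
    rw [hAB, hBC, hCA] at hdom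
    have : (n : ℝ) < 4 * (a + b + c) := by
      nlinarith [Real.sqrt_pos.mpr (by norm_num : (0 : ℝ) < 3)]
    exact_mod_cast this
  exact perimeterDominantSides_of_heron hn (by exact_mod_cast heron) hlt

theorem perimeter_dominant_classification_euclidean
    (A B C : EuclideanSpace ℝ (Fin 2))
    (hind : AffineIndependent ℝ ![A, B, C])
    (a b c n : ℕ) (ha : 0 < a) (hb : 0 < b) (hc : 0 < c) (hn : 0 < n)
    (hAB : dist A B = c * Real.sqrt 3)
    (hBC : dist B C = a * Real.sqrt 3)
    (hCA : dist C A = b * Real.sqrt 3)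
    (harea : volume (convexHull ℝ ({A, B, C} : Set (EuclideanSpace ℝ (Fin 2)))) =
      ENNReal.ofReal (n * Real.sqrt 3 / 4))
    (hdom : n * Real.sqrt 3 / 4 < dist A B + dist B C + dist C A) :
    ({a, b, c} : Multiset ℕ) = {3, 3, 3} ∨
    (∃ x y : ℕ, 0 < x ∧ 0 < y ∧ 4 * x^2 = 3 * y^2 + 1 ∧
      ({a, b, c} : Multiset ℕ) = {x, x, 1}) ∨
    (∃ x y : ℕ, 0 < x ∧ 0 < y ∧ x^2 = 3 * y^2 + 1 ∧
      ({a, b, c} : Multiset ℕ) = {x, x, 2}) ∨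
    (∃ x y : ℕ, 0 < x ∧ 0 < y ∧ 4 * x^2 = 15 * y^2 + 1 ∧
      ({a, b, c} : Multiset ℕ) = {3 * x + 1, 3 * x - 1, 3}) :=
  perimeter_dominant_classification_euclidean_general A B C a b c n hn hAB hBC hCA harea hdom
end

section
/- Let x, y be positive integers with 4x² − 3y² = 1. Then the integers x, x, 1 satisfy the strict triangle inequalities, and 3·(2x+1)·1·1·(2x−1) = (3y)², so the triangle with side lengths x√3, x√3, √3 has area 3y√3/4; moreover 3y < 4(2x+1), so this triangle is perimeter-dominant (its perimeter (2x+1)√3 exceeds its area). -/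
theorem family_a_perimeter_dominant
    (x y : ℕ) (hx : 0 < x) (hy : 0 < y) (h : 4 * x^2 = 3 * y^2 + 1) :
    (x < x + 1 ∧ x < 1 + x ∧ 1 < x + x) ∧
    3 * (2 * x + 1) * 1 * 1 * (2 * x - 1) = (3 * y)^2 ∧
    (Real.sqrt (((2 * x + 1) * Real.sqrt 3 / 2) *
        ((2 * x + 1) * Real.sqrt 3 / 2 - x * Real.sqrt 3) *
        ((2 * x + 1) * Real.sqrt 3 / 2 - x * Real.sqrt 3) *
        ((2 * x + 1) * Real.sqrt 3 / 2 - Real.sqrt 3)) = 3 * y * Real.sqrt 3 / 4) ∧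
    3 * y < 4 * (2 * x + 1) ∧
    (3 * y : ℝ) * Real.sqrt 3 / 4 < (2 * x + 1) * Real.sqrt 3 := by
  have hx1 : 1 ≤ x := hx
  have hlt : 3 * y < 4 * (2 * x + 1) := by nlinarith [sq_nonneg (3*y), sq_nonneg (8*x+4)]
  have hR : (4 : ℝ) * (x:ℝ)^2 = 3 * (y:ℝ)^2 + 1 := by exact_mod_cast h
  have hs3 : Real.sqrt 3 ^ 2 = 3 := Real.sq_sqrt (by norm_num)
  refine ⟨⟨by omega, by omega, by omega⟩, ?_, ?_, hlt, ?_⟩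
  · have h2 : 2 * x - 1 + 1 = 2 * x := by omega
    nlinarith [h2]
  · have heq : (((2 * (x:ℝ) + 1) * Real.sqrt 3 / 2) *
        ((2 * x + 1) * Real.sqrt 3 / 2 - x * Real.sqrt 3) *
        ((2 * x + 1) * Real.sqrt 3 / 2 - x * Real.sqrt 3) *
        ((2 * x + 1) * Real.sqrt 3 / 2 - Real.sqrt 3)) = (3 * y * Real.sqrt 3 / 4)^2 := by
      linear_combination (Real.sqrt 3 ^ 2 * (4 * (x:ℝ)^2 - 1) / 16) * hs3 + (3 * Real.sqrt 3 ^ 2 / 16) * hR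
    rw [heq, Real.sqrt_sq (by positivity)]
  · have h3 : (0:ℝ) < Real.sqrt 3 := by positivity
    have : (3 * y : ℝ) < 4 * (2 * x + 1) := by exact_mod_cast hlt
    nlinarith
end

section
/- Let x, y be positive integers with x² − 3y² = 1. Then the integers x, x, 2 satisfy the strict triangle inequalities, and 3·(2x+2)·2·2·(2x−2) = (12y)², so the triangle with side lengths x√3, x√3, 2√3 has area 3y√3; moreover 12y < 4(2x+2), so this triangle is perimeter-dominant (its perimeter (2x+2)√3 exceeds its area). -/
theorem family_b_perimeter_dominant
    (x y : ℕ) (hx : 0 < x) (hy : 0 < y) (h : x^2 = 3 * y^2 + 1) :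
    (x < x + 2 ∧ x < 2 + x ∧ 2 < x + x) ∧
    3 * (2 * x + 2) * 2 * 2 * (2 * x - 2) = (12 * y)^2 ∧
    (Real.sqrt (((2 * x + 2) * Real.sqrt 3 / 2) *
        ((2 * x + 2) * Real.sqrt 3 / 2 - x * Real.sqrt 3) *
        ((2 * x + 2) * Real.sqrt 3 / 2 - x * Real.sqrt 3) *
        ((2 * x + 2) * Real.sqrt 3 / 2 - 2 * Real.sqrt 3)) = 3 * y * Real.sqrt 3) ∧
    12 * y < 4 * (2 * x + 2) ∧
    (3 * y : ℝ) * Real.sqrt 3 < (2 * x + 2) * Real.sqrt 3 := by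
  have hx2 : 2 ≤ x := by nlinarith
  have hx' : (x:ℝ)^2 = 3 * (y:ℝ)^2 + 1 := by exact_mod_cast h
  have h3 : Real.sqrt 3 ^ 2 = 3 := Real.sq_sqrt (by norm_num)
  have hyx : 3 * y < 2 * x + 2 := by nlinarith
  refine ⟨⟨by omega, by omega, by omega⟩, ?_, ?_, ?_, ?_⟩
  · have h2 : 2 * x - 2 = 2 * (x - 1) := by omega
    rw [h2]
    have h1 : x - 1 + 1 = x := by omega
    nlinarith [h, h1, Nat.sub_add_cancel (by omega : 1 ≤ x)]
  · have heq : ((2 * (x:ℝ) + 2) * Real.sqrt 3 / 2) *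
        ((2 * x + 2) * Real.sqrt 3 / 2 - x * Real.sqrt 3) *
        ((2 * x + 2) * Real.sqrt 3 / 2 - x * Real.sqrt 3) *
        ((2 * x + 2) * Real.sqrt 3 / 2 - 2 * Real.sqrt 3) = (3 * y * Real.sqrt 3)^2 := by
      linear_combination (Real.sqrt 3)^4 * hx' + 3 * (y:ℝ)^2 * (Real.sqrt 3)^2 * h3
    push_cast
    rw [heq]
    exact Real.sqrt_sq (by positivity)
  · omega
  · have : (3 * (y:ℝ)) < 2 * x + 2 := by exact_mod_cast hyx
    push_cast
    nlinarith [Real.sqrt_pos.mpr (by norm_num : (0:ℝ) < 3), this]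
end

section
/- Let x, y be positive integers with 4x² − 15y² = 1. Then the integers 3x+1, 3x−1, 3 satisfy the strict triangle inequalities, and 3·(6x+3)·(6x−3)·5·1 = (45y)², so the triangle with side lengths (3x+1)√3, (3x−1)√3, 3√3 has area 45y√3/4; moreover 45y < 4(6x+3), so this triangle is perimeter-dominant (its perimeter (6x+3)√3 exceeds its area). -/
theorem family_c_perimeter_dominant
    (x y : ℕ) (hx : 0 < x) (hy : 0 < y) (h : 4 * x^2 = 15 * y^2 + 1) :
    (3 * x + 1 < (3 * x - 1) + 3 ∧ 3 * x - 1 < (3 * x + 1) + 3 ∧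
      3 < (3 * x + 1) + (3 * x - 1)) ∧
    3 * (6 * x + 3) * (6 * x - 3) * 5 * 1 = (45 * y)^2 ∧
    (Real.sqrt (((6 * x + 3) * Real.sqrt 3 / 2) *
        ((6 * x + 3) * Real.sqrt 3 / 2 - (3 * x + 1) * Real.sqrt 3) *
        ((6 * x + 3) * Real.sqrt 3 / 2 - (3 * x - 1) * Real.sqrt 3) *
        ((6 * x + 3) * Real.sqrt 3 / 2 - 3 * Real.sqrt 3)) = 45 * y * Real.sqrt 3 / 4) ∧
    45 * y < 4 * (6 * x + 3) ∧
    (45 * y : ℝ) * Real.sqrt 3 / 4 < (6 * x + 3) * Real.sqrt 3 := by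
  obtain ⟨x, rfl⟩ : ∃ x', x = x' + 1 := ⟨x - 1, by omega⟩
  have e1 : 3 * (x + 1) - 1 = 3 * x + 2 := by omega
  have e2 : 6 * (x + 1) - 3 = 6 * x + 3 := by omega
  have hc : (4 : ℝ) * ((x : ℝ) + 1)^2 = 15 * y^2 + 1 := by exact_mod_cast h
  have hs : Real.sqrt 3 ^ 2 = 3 := Real.sq_sqrt (by norm_num)
  have hineq : 45 * y < 4 * (6 * (x + 1) + 3) := by nlinarith [h, hy, hx]
  refine ⟨⟨by omega, by omega, by omega⟩, ?_, ?_, hineq, ?_⟩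
  · rw [e2]; zify; zify at h; linear_combination (135 : ℤ) * h
  · push_cast
    rw [show ((6 * ((x:ℝ) + 1) + 3) * Real.sqrt 3 / 2) *
        ((6 * (x + 1) + 3) * Real.sqrt 3 / 2 - (3 * (x + 1) + 1) * Real.sqrt 3) *
        ((6 * (x + 1) + 3) * Real.sqrt 3 / 2 - (3 * (x + 1) - 1) * Real.sqrt 3) *
        ((6 * (x + 1) + 3) * Real.sqrt 3 / 2 - 3 * Real.sqrt 3)
        = (45 * y * Real.sqrt 3 / 4) ^ 2 by
      linear_combination (45 * Real.sqrt 3 ^ 4 / 16) * hc +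
        (675 * (y:ℝ)^2 * Real.sqrt 3 ^ 2 / 16) * hs]
    exact Real.sqrt_sq (by positivity)
  · have h1 : (45 * y : ℝ) < 4 * (6 * (x + 1) + 3) := by exact_mod_cast hineq
    have h2 : (0:ℝ) < Real.sqrt 3 := Real.sqrt_pos.mpr (by norm_num)
    push_cast at h1 ⊢
    nlinarith [h1, h2]
end

section
/- Let u, v, w be positive integers, all of the same parity, with u ≤ v ≤ w, such that 3uvw < 16(u+v+w) and such that 3(u+v+w)uvw is a perfect square. Then either (u,v) = (1,1), or (u,v) = (1,5), or (u,v) = (2,2), or (u,v,w) = (3,3,3). -/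
/-- Structurally recursive check whether some `n ≤ B` has `n*n = M`. -/
def hasSqrtBelow (M : ℕ) : ℕ → Bool
  | 0 => 0 == M
  | n+1 => ((n+1)*(n+1) == M) || hasSqrtBelow M n

lemma hasSqrtBelow_of_sq (n : ℕ) : ∀ B, n ≤ B → hasSqrtBelow (n^2) B = true := by
  intro B
  induction B with
  | zero => intro hn; interval_cases n; decide
  | succ B ih =>
    intro hn
    rcases Nat.lt_or_ge n (B+1) with h' | h'
    · simp [hasSqrtBelow, ih (by omega)]
    · have : n = B + 1 := by omega
      subst this
      simp [hasSqrtBelow, pow_two]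

lemma not_sq_aux (M : ℕ) (hM : M < 150 * 150) (h : hasSqrtBelow M 149 = false) :
    ¬ ∃ n : ℕ, M = n ^ 2 := by
  rintro ⟨n, rfl⟩
  have hn : n ≤ 149 := by nlinarith
  rw [hasSqrtBelow_of_sq n 149 hn] at h
  exact Bool.noConfusion h

set_option maxHeartbeats 2000000 in
theorem possible_uv_pairs
    (u v w : ℕ) (hu : 0 < u) (huv : u ≤ v) (hvw : v ≤ w)
    (hparity : (Even u ∧ Even v ∧ Even w) ∨ (Odd u ∧ Odd v ∧ Odd w))
    (h : 3 * u * v * w < 16 * (u + v + w))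
    (hsq : ∃ n : ℕ, 3 * (u + v + w) * u * v * w = n^2) :
    (u, v) = (1, 1) ∨ (u, v) = (1, 5) ∨ (u, v) = (2, 2) ∨ (u, v, w) = (3, 3, 3) := by
  obtain ⟨hp1, hp2⟩ : u % 2 = v % 2 ∧ v % 2 = w % 2 := by
    rcases hparity with ⟨a, b, c⟩ | ⟨a, b, c⟩ <;>
      simp [Nat.even_iff, Nat.odd_iff] at a b c <;> omega
  clear hparity
  have h3w : 3 * u * v * w < 48 * w := lt_of_lt_of_le h (by omega)
  have h48 : 3 * u * v < 48 := lt_of_mul_lt_mul_right h3w (Nat.zero_le w)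
  have hv15 : v ≤ 15 := by nlinarith
  have hu3 : u ≤ 3 := by nlinarith
  interval_cases u <;> interval_cases v <;>
  first
    | exact Or.inl rfl
    | exact Or.inr (Or.inl rfl)
    | exact Or.inr (Or.inr (Or.inl rfl))
    | omega
    | -- the (1,3) case: 9 w (w+4) = n^2 is impossible
      (exfalso
       obtain ⟨n, hn⟩ := hsq
       have h1 : 3 * w < n := by
         rcases Nat.lt_or_ge (3 * w) n with h' | h'
         · exact h'
         · exfalso; nlinarith
       have h2 : n < 3 * w + 6 := by
         rcases Nat.lt_or_ge n (3 * w + 6) with h' | h'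
         · exact h'
         · exfalso; nlinarith
       have hn' : n = 3*w+1 ∨ n = 3*w+2 ∨ n = 3*w+3 ∨ n = 3*w+4 ∨ n = 3*w+5 := by omega
       rcases hn' with rfl | rfl | rfl | rfl | rfl <;>
         first
           | nlinarith
           | exact absurd (show 6 * w = 25 by linarith) (by omega))
    | -- finite w cases
      (have hw30 : w ≤ 30 := by omega
       interval_cases w <;>
         first
           | omega
           | exact Or.inr (Or.inr (Or.inr rfl))
           | exact absurd hsq (not_sq_aux _ (by norm_num) (by decide)))
end

section
/- For every odd positive integer w, the number 21w(w+8) is not a perfect square. -/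
theorem not_square_21w
    (w : ℕ) (hw : 0 < w) (hodd : Odd w) :
    ¬ ∃ n : ℕ, 21 * w * (w + 8) = n^2 := by
  rintro ⟨n, hn⟩
  have hw2 : w % 2 = 1 := Nat.odd_iff.mp hodd
  have h1 : (21 * w * (w + 8)) % 8 = 5 := by
    have h8 : w % 8 = 1 ∨ w % 8 = 3 ∨ w % 8 = 5 ∨ w % 8 = 7 := by omega
    rw [Nat.mul_mod, Nat.mul_mod 21 w, Nat.add_mod w 8]
    rcases h8 with h | h | h | h <;> rw [h] <;> norm_num
  have h2 : n ^ 2 % 8 = 0 ∨ n ^ 2 % 8 = 1 ∨ n ^ 2 % 8 = 4 := by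
    have : n % 8 < 8 := Nat.mod_lt _ (by norm_num)
    rw [Nat.pow_mod]
    interval_cases h : n % 8 <;> norm_num
  omega
end

section
/- Let w be an odd positive integer and n a positive integer. Then n² = 3w(w+2) if and only if there exist positive integers x, y with w = 2x−1, n = 3y and 4x² − 3y² = 1. -/
theorem case_a_pell
    (w n : ℕ) (hw : 0 < w) (hodd : Odd w) (hn : 0 < n) :
    n^2 = 3 * w * (w + 2) ↔
      ∃ x y : ℕ, 0 < x ∧ 0 < y ∧ w = 2 * x - 1 ∧ n = 3 * y ∧ 4 * x^2 = 3 * y^2 + 1 := by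
  constructor
  · intro h
    obtain ⟨k, hk⟩ := hodd
    have h3 : 3 ∣ n := by
      have : (3 : ℕ) ∣ n ^ 2 := ⟨w * (w + 2), by linarith⟩
      exact Nat.Prime.dvd_of_dvd_pow (by norm_num) this
    obtain ⟨y, hy⟩ := h3
    refine ⟨k + 1, y, Nat.succ_pos _, by omega, by omega, hy, ?_⟩
    subst hy hk
    nlinarith [h]
  · rintro ⟨x, y, hx, hy, rfl, rfl, heq⟩
    have hx1 : 1 ≤ x := hx
    have h1 : 2 * x - 1 + 2 = 2 * x + 1 := by omega
    rw [h1]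
    have h2 : (2 * x - 1) = 2 * (x - 1) + 1 := by omega
    rw [h2]
    nlinarith [heq, Nat.sub_add_cancel hx1]
end

section
/- Let w be an odd positive integer and n a positive integer. Then n² = 15w(w+6) if and only if there exist positive integers x, y with w = 6x−3, n = 45y and 4x² − 15y² = 1. -/
theorem case_c_pell
    (w n : ℕ) (hw : 0 < w) (hodd : Odd w) (hn : 0 < n) :
    n^2 = 15 * w * (w + 6) ↔
      ∃ x y : ℕ, 0 < x ∧ 0 < y ∧ w = 6 * x - 3 ∧ n = 45 * y ∧ 4 * x^2 = 15 * y^2 + 1 := by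
  constructor
  · intro h
    -- 3 ∣ n
    have h3n : (3 : ℕ) ∣ n := by
      refine Nat.Prime.dvd_of_dvd_pow (p := 3) (n := 2) (by norm_num) ⟨5 * (w * (w+6)), ?_⟩
      rw [h]; ring
    obtain ⟨m, hm⟩ := h3n
    have hm2 : 3 * m ^ 2 = 5 * (w * (w + 6)) := by
      have : 3 * (3 * m ^ 2) = 3 * (5 * (w * (w + 6))) := by
        subst hm; rw [show (3*m)^2 = 3 * (3 * m^2) by ring] at h; linarith
      exact Nat.eq_of_mul_eq_mul_left (by norm_num) this
    have h3w : (3 : ℕ) ∣ w := by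
      have h1 : (3 : ℕ) ∣ 5 * (w * (w + 6)) := ⟨m ^ 2, hm2.symm⟩
      have h2 : (3 : ℕ) ∣ w * (w + 6) :=
        (Nat.Coprime.dvd_of_dvd_mul_left (by norm_num) h1)
      rcases (Nat.Prime.dvd_mul (by norm_num)).mp h2 with h' | h'
      · exact h'
      · omega
    obtain ⟨v, hv⟩ := h3w
    have hvodd : Odd v := by
      rw [hv] at hodd
      exact (Nat.odd_mul.mp hodd).2
    obtain ⟨k, hk⟩ := hvodd
    have hw6 : w = 6 * k + 3 := by omega
    have hm3 : m ^ 2 = 15 * ((2*k+1) * (2*k+3)) := by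
      have : 3 * (m ^ 2) = 3 * (15 * ((2*k+1) * (2*k+3))) := by
        rw [hm2, hw6]; ring
      exact Nat.eq_of_mul_eq_mul_left (by norm_num) this
    have h3m : (3 : ℕ) ∣ m := by
      refine Nat.Prime.dvd_of_dvd_pow (p := 3) (n := 2) (by norm_num) ⟨5 * ((2*k+1) * (2*k+3)), ?_⟩
      rw [hm3]; ring
    have h5m : (5 : ℕ) ∣ m := by
      refine Nat.Prime.dvd_of_dvd_pow (p := 5) (n := 2) (by norm_num) ⟨3 * ((2*k+1) * (2*k+3)), ?_⟩
      rw [hm3]; ring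
    have h15m : (15 : ℕ) ∣ m := Nat.Coprime.mul_dvd_of_dvd_of_dvd (by norm_num) h3m h5m
    obtain ⟨y, hy⟩ := h15m
    have hy2 : 15 * y ^ 2 = (2*k+1) * (2*k+3) := by
      have : 15 * (15 * y ^ 2) = 15 * ((2*k+1) * (2*k+3)) := by
        rw [← hm3, hy]; ring
      exact Nat.eq_of_mul_eq_mul_left (by norm_num) this
    have hypos : 0 < y := by
      rcases Nat.eq_zero_or_pos y with h0 | h0
      · exfalso; subst h0; omega
      · exact h0
    refine ⟨k + 1, y, by omega, hypos, by omega, by omega, ?_⟩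
    have : 4 * (k+1)^2 = (2*k+1)*(2*k+3) + 1 := by ring
    omega
  · rintro ⟨x, y, hx, hy, hwx, hny, hxy⟩
    have h6 : w + 3 = 6 * x := by omega
    have key : 15 * w * (w + 6) + 135 = 15 * ((w+3) * (w+3)) := by ring
    rw [h6] at key
    have : 15 * ((6*x) * (6*x)) = 135 * (4 * x^2) := by ring
    rw [this, hxy] at key
    subst hny
    have hn2 : (45*y)^2 = 2025 * y^2 := by ring
    omega
end

section
/- Define the sequence (xₙ) of positive integers by x₁ = 1, x₂ = 13 and xₙ = 14xₙ₋₁ − xₙ₋₂ for n ≥ 3. Then (xₙ) is strictly increasing, and a positive integer x satisfies 4x² − 3y² = 1 for some positive integer y if and only if x = xₙ for some n ≥ 1. -/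
private def pa : ℕ → ℕ × ℕ
  | 0 => (1, 1)
  | n + 1 => (7 * (pa n).1 + 6 * (pa n).2, 8 * (pa n).1 + 7 * (pa n).2)

private lemma pa_pos (k : ℕ) : 0 < (pa k).1 ∧ 0 < (pa k).2 := by
  induction k with
  | zero => simp [pa]
  | succ n ih => simp [pa]; omega

private lemma pa_sol (k : ℕ) : 4 * (pa k).1 ^ 2 = 3 * (pa k).2 ^ 2 + 1 := by
  induction k with
  | zero => simp [pa]
  | succ n ih =>
    show 4 * (7 * (pa n).1 + 6 * (pa n).2) ^ 2
        = 3 * (8 * (pa n).1 + 7 * (pa n).2) ^ 2 + 1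
    ring_nf
    ring_nf at ih
    linarith

private lemma pa_rec (m : ℕ) :
    (pa (m + 2)).1 + (pa m).1 = 14 * (pa (m + 1)).1 := by
  show 7 * (pa (m+1)).1 + 6 * (pa (m+1)).2 + (pa m).1 = _
  show 7 * (7 * (pa m).1 + 6 * (pa m).2) + 6 * (8 * (pa m).1 + 7 * (pa m).2)
      + (pa m).1 = 14 * (7 * (pa m).1 + 6 * (pa m).2)
  ring

private lemma descent : ∀ X : ℕ, 0 < X → ∀ y : ℕ, 0 < y →
    4 * X ^ 2 = 3 * y ^ 2 + 1 → ∃ k, X = (pa k).1 := by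
  intro X
  induction X using Nat.strong_induction_on with
  | _ X ih =>
    intro hX y hy heq
    by_cases h1 : X = 1
    · exact ⟨0, by simp [pa, h1]⟩
    · have hX2 : 2 ≤ X := by omega
      have hyX : X < y := by nlinarith
      have hy4 : 4 ≤ y := by
        rcases Nat.lt_or_ge y 4 with h | h
        · interval_cases y <;> interval_cases X <;> omega
        · exact h
      have h67 : 6 * y < 7 * X := by nlinarith
      have h87 : 8 * X ≤ 7 * y := by nlinarith
      set X' := 7 * X - 6 * y with hX'
      set y' := 7 * y - 8 * X with hy'
      have heq' : 4 * X' ^ 2 = 3 * y' ^ 2 + 1 := by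
        have : (4 : ℤ) * X' ^ 2 = 3 * y' ^ 2 + 1 := by
          have hz : (4 : ℤ) * X ^ 2 = 3 * y ^ 2 + 1 := by exact_mod_cast heq
          rw [hX', hy']
          push_cast [Nat.cast_sub h67.le, Nat.cast_sub h87]
          ring_nf
          ring_nf at hz
          linarith
        exact_mod_cast this
      have hX'pos : 0 < X' := by omega
      have hy'pos : 0 < y' := by
        rcases Nat.eq_zero_or_pos y' with h0 | h0
        · rw [h0] at heq'; nlinarith
        · exact h0
      have hX'lt : X' < X := by omega
      obtain ⟨k, hk⟩ := ih X' hX'lt hX'pos y' hy'pos heq'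
      refine ⟨k + 1, ?_⟩
      have hb : y' = (pa k).2 := by
        have hs := pa_sol k
        rw [← hk] at hs
        have : y' ^ 2 = (pa k).2 ^ 2 := by omega
        exact Nat.pow_left_injective (by norm_num) this
      show X = 7 * (pa k).1 + 6 * (pa k).2
      omega

theorem pell_sequence_case_a
    (x : ℕ → ℕ) (h1 : x 1 = 1) (h2 : x 2 = 13)
    (hrec : ∀ n, 3 ≤ n → (x n : ℤ) = 14 * x (n - 1) - x (n - 2)) :
    (∀ n, 1 ≤ n → x n < x (n + 1)) ∧
    (∀ X : ℕ, 0 < X →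
      ((∃ y : ℕ, 0 < y ∧ 4 * X^2 = 3 * y^2 + 1) ↔ ∃ n, 1 ≤ n ∧ X = x n)) := by
  have key : ∀ n, 1 ≤ n → x n = (pa (n - 1)).1 ∧ x (n + 1) = (pa n).1 := by
    intro n hn
    induction n, hn using Nat.le_induction with
    | base => constructor <;> simp [pa, h1, h2]
    | succ n hn ih =>
      obtain ⟨m, rfl⟩ : ∃ m, n = m + 1 := ⟨n - 1, by omega⟩
      refine ⟨by simpa using ih.2, ?_⟩
      have h3 : 3 ≤ m + 1 + 1 + 1 := by omega
      have hr := hrec (m + 1 + 1 + 1) h3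
      simp only [Nat.add_sub_cancel] at hr
      have hr' : (x (m + 3) : ℤ) = 14 * (pa (m + 1)).1 - (pa m).1 := by
        have e1 : x (m + 1 + 1) = (pa (m + 1)).1 := ih.2
        have e2 : x (m + 1) = (pa m).1 := by simpa using ih.1
        rw [show m + 3 - 2 = m + 1 from rfl, e1, e2] at hr
        exact hr
      have hrc := pa_rec m
      have : (x (m + 3) : ℤ) = ((pa (m + 2)).1 : ℤ) := by
        rw [hr']
        have : ((pa (m + 2)).1 : ℤ) + (pa m).1 = 14 * (pa (m + 1)).1 := by exact_mod_cast hrc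
        linarith
      exact_mod_cast this
  constructor
  · intro n hn
    obtain ⟨e1, e2⟩ := key n hn
    rw [e1, e2]
    obtain ⟨m, rfl⟩ : ∃ m, n = m + 1 := ⟨n - 1, by omega⟩
    simp only [Nat.add_sub_cancel]
    show (pa m).1 < 7 * (pa m).1 + 6 * (pa m).2
    have := pa_pos m
    omega
  · intro X hXpos
    constructor
    · rintro ⟨y, hy, heq⟩
      obtain ⟨k, hk⟩ := descent X hXpos y hy heq
      exact ⟨k + 1, by omega, by rw [hk, (key (k + 1) (by omega)).1]; simp⟩
    · rintro ⟨n, hn, rfl⟩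
      rw [(key n hn).1]
      exact ⟨(pa (n - 1)).2, (pa_pos _).2, pa_sol _⟩
end

section
/- Define the sequence (xₙ) of positive integers by x₁ = 2, x₂ = 122 and xₙ = 62xₙ₋₁ − xₙ₋₂ for n ≥ 3. Then (xₙ) is strictly increasing, and a positive integer x satisfies 4x² − 15y² = 1 for some positive integer y if and only if x = xₙ for some n ≥ 1. -/
/-!
With `X = 2x` the equation becomes `X² - 15y² = 1`, whose solutions in ℕ are exactly the
`(xₙ, yₙ)` with `xₙ + yₙ√15 = (4 + √15)ⁿ` (`Pell.eq_pell` with `a = 4`). From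
`xₙ₊₂ + xₙ = 8xₙ₊₁`, `xₙ` is even exactly when `n` is odd, and the addition formula gives
`xₙ₊₄ = 2x₂xₙ₊₂ - xₙ = 62xₙ₊₂ - xₙ`; so the given sequence is `x₁/2, x₃/2, x₅/2, …`.
-/

namespace Pell

variable {a : ℕ} (a1 : 1 < a)

theorem xz_add_add (m n : ℕ) : xz a1 (n + m + m) = 2 * xz a1 m * xz a1 (n + m) - xz a1 n := by
  have hadd := congrArg (Nat.cast : ℕ → ℤ) (xn_add a1 (n + m) m)
  have hsub := xz_sub a1 (Nat.le_add_left m n)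
  rw [Nat.add_sub_cancel] at hsub
  simp only [xz, yz] at hsub ⊢
  rw [hadd, hsub]; push_cast; ring

theorem even_xn_iff_odd (ha : Even a) (n : ℕ) : Even (xn a1 n) ↔ Odd n := by
  induction n using Nat.twoStepInduction with
  | zero => simp
  | one => simpa using ha
  | more n ih _ =>
    have h : Even (xn a1 (n + 2) + xn a1 n) := xn_succ_succ a1 n ▸ ⟨a * xn a1 (n + 1), by ring⟩
    rw [Nat.even_add] at h
    rw [h, ih, Nat.odd_add]; simp

-- `Pell.d a1` is private; it unfolds to `a * a - 1`, hence the `change`s below.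
theorem two_mul_solution_iff (ha : Even a) {X y : ℕ} :
    2 * X * (2 * X) = (a * a - 1) * y * y + 1 ↔
      ∃ k, 2 * X = xn a1 (2 * k + 1) ∧ y = yn a1 (2 * k + 1) := by
  constructor
  · intro h
    obtain ⟨n, hX, rfl⟩ := eq_pell a1 (x := 2 * X) (y := y) <| by
      change 2 * X * (2 * X) - (a * a - 1) * y * y = 1
      omega
    obtain ⟨k, rfl⟩ := (even_xn_iff_odd a1 ha n).1 (hX ▸ even_two_mul X)
    exact ⟨k, hX, rfl⟩
  · rintro ⟨k, hX, rfl⟩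
    have h := pell_eq a1 (2 * k + 1)
    change xn a1 (2 * k + 1) * xn a1 (2 * k + 1)
      - (a * a - 1) * yn a1 (2 * k + 1) * yn a1 (2 * k + 1) = 1 at h
    rw [hX]
    omega

end Pell

open Pell in
theorem two_mul_eq_xn_of_rec (x : ℕ → ℕ) (h1 : x 1 = 2) (h2 : x 2 = 122)
    (hrec : ∀ n, 3 ≤ n → (x n : ℤ) = 62 * x (n - 1) - x (n - 2)) (k : ℕ) :
    2 * x (k + 1) = xn (by norm_num : 1 < 4) (2 * k + 1) := by
  suffices (2 * x (k + 1) : ℤ) = xz (by norm_num : 1 < 4) (2 * k + 1) by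
    rw [xz] at this
    exact_mod_cast this
  induction k using Nat.twoStepInduction with
  | zero => simp [h1, xz]
  | one => simp [h2, xz]; rfl
  | more k ih₀ ih₁ =>
    have hx := hrec (k + 3) (by omega)
    have hxz := xz_add_add (by norm_num : 1 < 4) 2 (2 * k + 1)
    have h31 : xz (by norm_num : 1 < 4) 2 = 31 := rfl
    simp only [show k + 3 - 1 = k + 1 + 1 by omega, show k + 3 - 2 = k + 1 by omega] at hx
    rw [show 2 * (k + 2) + 1 = 2 * k + 1 + 2 + 2 by ring, hxz, h31,
      show 2 * k + 1 + 2 = 2 * (k + 1) + 1 by ring, ← ih₀, ← ih₁, hx]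
    ring

open Pell in
theorem pell_sequence_case_c
    (x : ℕ → ℕ) (h1 : x 1 = 2) (h2 : x 2 = 122)
    (hrec : ∀ n, 3 ≤ n → (x n : ℤ) = 62 * x (n - 1) - x (n - 2)) :
    (∀ n, 1 ≤ n → x n < x (n + 1)) ∧
    (∀ X : ℕ, 0 < X →
      ((∃ y : ℕ, 0 < y ∧ 4 * X^2 = 15 * y^2 + 1) ↔ ∃ n, 1 ≤ n ∧ X = x n)) := by
  have a1 : 1 < 4 := by norm_num
  have hx := two_mul_eq_xn_of_rec x h1 h2 hrec
  refine ⟨fun n hn => ?_, fun X _ => ?_⟩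
  · obtain ⟨k, rfl⟩ := Nat.exists_eq_add_of_le' hn
    have := strictMono_x a1 (show 2 * k + 1 < 2 * (k + 1) + 1 by omega)
    have := hx k
    have := hx (k + 1)
    omega
  have hX (y : ℕ) :
      4 * X ^ 2 = 15 * y ^ 2 + 1 ↔ 2 * X * (2 * X) = (4 * 4 - 1) * y * y + 1 := by
    constructor <;> intro h <;> linarith
  simp_rw [hX, two_mul_solution_iff a1 (by decide : Even 4)]
  constructor
  · rintro ⟨y, -, k, hk, -⟩
    have := hx k
    exact ⟨k + 1, by omega, by omega⟩
  · rintro ⟨n, hn, rfl⟩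
    obtain ⟨k, rfl⟩ := Nat.exists_eq_add_of_le' hn
    have := yn_ge_n a1 (2 * k + 1)
    exact ⟨yn a1 (2 * k + 1), by omega, k, hx k, rfl⟩
end
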